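/- arXiv:1707.08284 — 3 statements merged into one kernel-verified Lean document; each statement's English description precedes it below -/
import Mathlib

section
/- Let θ := β/μ and κ := (γθ−ζ)/(γθ), and assume R₀ := βγ/(μζ) > 1 with all parameters positive. Then κ ∈ (0,1], and every point (x₁,x₂,y,z) = (κx, κ(1−x), θκx, θκ(1−x)) with x ∈ [0,1] is a stationary point of the system x₁' = γ(1−x₁−x₂)y − ζx₁, x₂' = γ(1−x₁−x₂)z − ζx₂, y' = βx₁ − μy, z' = βx₂ − μz. -/
/-!
On the line the total `x₁ + x₂` equals `κ`, the unique level at which the effective infection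
rate `γ θ (1 - x₁ - x₂)` balances the loss rate `ζ`; the seed-bank equations balance because
`y = θ x₁`, `z = θ x₂` with `μ θ = β`. How `κ` is split between the two components is free,
which is why a whole segment of stationary points appears.
-/

theorem lt_mul_div_of_one_lt_div {β γ ζ μ : ℝ} (hζ : 0 < ζ) (hμ : 0 < μ)
    (h : 1 < β * γ / (μ * ζ)) : ζ < γ * (β / μ) := by
  rw [one_lt_div (mul_pos hμ hζ)] at h
  rw [mul_div_assoc', lt_div_iff₀ hμ]
  linarith

theorem sub_div_self_mem_Ioc {a b : ℝ} (hb : 0 < b) (hba : b < a) :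
    (a - b) / a ∈ Set.Ioc 0 1 :=
  ⟨div_pos (sub_pos.2 hba) (hb.trans hba),
    (div_le_one (hb.trans hba)).2 (sub_le_self a hb.le)⟩

theorem mul_one_sub_sub_div_self {a b : ℝ} (ha : a ≠ 0) : a * (1 - (a - b) / a) = b := by
  field_simp
  ring

theorem stmt_1_general (β γ ζ μ θ κ : ℝ)
    (hζ : 0 < ζ) (hμ : 0 < μ)
    (hθdef : θ = β / μ)
    (hκdef : κ = (γ * θ - ζ) / (γ * θ))
    (hR : β * γ / (μ * ζ) > 1) :
    (0 < κ ∧ κ ≤ 1) ∧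
    ∀ x ∈ Set.Icc (0:ℝ) 1,
      γ * (1 - κ * x - κ * (1 - x)) * (θ * κ * x) - ζ * (κ * x) = 0 ∧
      γ * (1 - κ * x - κ * (1 - x)) * (θ * κ * (1 - x)) - ζ * (κ * (1 - x)) = 0 ∧
      β * (κ * x) - μ * (θ * κ * x) = 0 ∧
      β * (κ * (1 - x)) - μ * (θ * κ * (1 - x)) = 0 := by
  have hζθ : ζ < γ * θ := hθdef ▸ lt_mul_div_of_one_lt_div hζ hμ hR
  have hκ : κ ∈ Set.Ioc 0 1 := hκdef ▸ sub_div_self_mem_Ioc hζ hζθ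
  have hinfection : γ * θ * (1 - κ) = ζ :=
    hκdef ▸ mul_one_sub_sub_div_self (hζ.trans hζθ).ne'
  have hseed : μ * θ = β := by rw [hθdef, mul_div_cancel₀ _ hμ.ne']
  refine ⟨hκ, fun x _ => ⟨?_, ?_, ?_, ?_⟩⟩
  · linear_combination (κ * x) * hinfection
  · linear_combination (κ * (1 - x)) * hinfection
  · linear_combination (-(κ * x)) * hseed
  · linear_combination (-(κ * (1 - x))) * hseed

/-- with θ = β/μ, κ = (γθ−ζ)/(γθ) and R₀ = βγ/(μζ) > 1,
κ ∈ (0,1] and the points (κx, κ(1−x), θκx, θκ(1−x)), x ∈ [0,1], are stationary. -/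
theorem stmt_1 (β γ ζ μ θ κ : ℝ)
    (hβ : 0 < β) (hγ : 0 < γ) (hζ : 0 < ζ) (hμ : 0 < μ)
    (hθdef : θ = β / μ)
    (hκdef : κ = (γ * θ - ζ) / (γ * θ))
    (hR : β * γ / (μ * ζ) > 1) :
    (0 < κ ∧ κ ≤ 1) ∧
    ∀ x ∈ Set.Icc (0:ℝ) 1,
      γ * (1 - κ * x - κ * (1 - x)) * (θ * κ * x) - ζ * (κ * x) = 0 ∧
      γ * (1 - κ * x - κ * (1 - x)) * (θ * κ * (1 - x)) - ζ * (κ * (1 - x)) = 0 ∧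
      β * (κ * x) - μ * (θ * κ * x) = 0 ∧
      β * (κ * (1 - x)) - μ * (θ * κ * (1 - x)) = 0 :=
  stmt_1_general β γ ζ μ θ κ hζ hμ hθdef hκdef hR
end

section
/- Let θ := (β−ζ)/μ > 0 and consider the system x' = −ζxz/(y+z) + ζ(1−x)y/(y+z), y' = βx − μy − ζy/(y+z), z' = β(1−x) − μz − ζz/(y+z). At any stationary point (x, θx, θ(1−x)) with x ∈ (0,1), the Jacobian has the vector (0, x, 1−x) as an eigenvector with eigenvalue −μ and the vector (ζ, −β, β) as an eigenvector with eigenvalue −ζ − β/θ. -/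
/-!
Both eigenvector statements hold because the field is affine along the two lines through the
stationary point: along `(0, x, 1 - x)` the ratios `y / (y + z)` and `z / (y + z)` are frozen,
and along `(ζ, -β, β)` the sum `y + z` is frozen, so every term of the field becomes linear in
the line parameter. The Jacobian applied to the direction is then read off as a line derivative.
-/

open Filter Topology

theorem fderiv_apply_eq_of_eventually_affine_on_line {𝕜 E F : Type*} [NontriviallyNormedField 𝕜]
    [NormedAddCommGroup E] [NormedSpace 𝕜 E] [NormedAddCommGroup F] [NormedSpace 𝕜 F]
    {f : E → F} {p v : E} {w : F} (hf : DifferentiableAt 𝕜 f p)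
    (h : ∀ᶠ t in 𝓝 (0 : 𝕜), f (p + t • v) = f p + t • w) :
    fderiv 𝕜 f p v = w := by
  have hline : HasLineDerivAt 𝕜 f w p v := by
    have hlin : HasDerivAt (fun t : 𝕜 => f p + t • w) w 0 := by
      simpa using ((hasDerivAt_id (0 : 𝕜)).smul_const w).const_add (f p)
    exact hlin.congr_of_eventuallyEq h
  rw [← hf.lineDeriv_eq_fderiv, hline.lineDeriv]

noncomputable def vectorField (β ζ μ : ℝ) (p : ℝ × ℝ × ℝ) : ℝ × ℝ × ℝ :=
  (-ζ * p.1 * p.2.2 / (p.2.1 + p.2.2) + ζ * (1 - p.1) * p.2.1 / (p.2.1 + p.2.2),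
   β * p.1 - μ * p.2.1 - ζ * p.2.1 / (p.2.1 + p.2.2),
   β * (1 - p.1) - μ * p.2.2 - ζ * p.2.2 / (p.2.1 + p.2.2))

namespace vectorField

variable {β ζ μ θ : ℝ}

theorem differentiableAt {p : ℝ × ℝ × ℝ} (hp : p.2.1 + p.2.2 ≠ 0) :
    DifferentiableAt ℝ (vectorField β ζ μ) p := by
  unfold vectorField
  fun_prop (disch := exact hp)

theorem apply_stationary (hμθ : μ * θ = β - ζ) (hθ : θ ≠ 0) (x : ℝ) :
    vectorField β ζ μ (x, θ * x, θ * (1 - x)) = 0 := by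
  simp only [vectorField, Prod.ext_iff, Prod.fst_zero, Prod.snd_zero]
  obtain rfl : β = μ * θ + ζ := by linarith
  refine ⟨?_, ?_, ?_⟩ <;> field_simp <;> ring

theorem apply_add_smul_ratio_preserving_direction (hμθ : μ * θ = β - ζ) {x t : ℝ} (ht : θ + t ≠ 0) :
    vectorField β ζ μ ((x, θ * x, θ * (1 - x)) + t • ((0 : ℝ), x, 1 - x))
      = t • ((-μ) • ((0 : ℝ), x, 1 - x)) := by
  have hsum : θ * x + t * x + (θ * (1 - x) + t * (1 - x)) = θ + t := by ring
  simp only [vectorField, Prod.ext_iff, Prod.fst_add, Prod.snd_add, Prod.smul_fst,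
    Prod.smul_snd, smul_eq_mul, hsum]
  obtain rfl : β = μ * θ + ζ := by linarith
  refine ⟨?_, ?_, ?_⟩ <;> field_simp <;> ring

theorem apply_add_smul_sum_preserving_direction (hμθ : μ * θ = β - ζ) (hθ : θ ≠ 0) (x t : ℝ) :
    vectorField β ζ μ ((x, θ * x, θ * (1 - x)) + t • (ζ, -β, β))
      = t • ((-ζ - β / θ) • (ζ, -β, β)) := by
  have hsum : θ * x + t * -β + (θ * (1 - x) + t * β) = θ := by ring
  simp only [vectorField, Prod.ext_iff, Prod.fst_add, Prod.snd_add, Prod.smul_fst,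
    Prod.smul_snd, smul_eq_mul, hsum]
  obtain rfl : β = μ * θ + ζ := by linarith
  refine ⟨?_, ?_, ?_⟩ <;> field_simp <;> ring

end vectorField

theorem stmt_4_general (β ζ μ θ : ℝ)
    (hμ : 0 < μ) (hβζ : ζ < β)
    (hθdef : θ = (β - ζ) / μ)
    (F : ℝ × ℝ × ℝ → ℝ × ℝ × ℝ)
    (hF : ∀ p : ℝ × ℝ × ℝ,
      F p = (-ζ * p.1 * p.2.2 / (p.2.1 + p.2.2) + ζ * (1 - p.1) * p.2.1 / (p.2.1 + p.2.2),
             β * p.1 - μ * p.2.1 - ζ * p.2.1 / (p.2.1 + p.2.2),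
             β * (1 - p.1) - μ * p.2.2 - ζ * p.2.2 / (p.2.1 + p.2.2))) :
    ∀ x ∈ Set.Ioo (0:ℝ) 1,
      fderiv ℝ F (x, θ * x, θ * (1 - x)) ((0:ℝ), x, 1 - x)
        = (-μ) • ((0:ℝ), x, 1 - x) ∧
      fderiv ℝ F (x, θ * x, θ * (1 - x)) (ζ, -β, β)
        = (-ζ - β / θ) • (ζ, -β, β) := by
  intro x _
  obtain rfl : F = vectorField β ζ μ := funext hF
  have hθ : θ ≠ 0 := by rw [hθdef]; exact (div_pos (sub_pos.mpr hβζ) hμ).ne'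
  have hμθ : μ * θ = β - ζ := by rw [hθdef]; field_simp
  have hdiff : DifferentiableAt ℝ (vectorField β ζ μ) (x, θ * x, θ * (1 - x)) :=
    vectorField.differentiableAt (by simpa [← mul_add] using hθ)
  have hθt : ∀ᶠ t in 𝓝 (0 : ℝ), θ + t ≠ 0 :=
    (continuous_const.add continuous_id).continuousAt.eventually_ne (by simpa using hθ)
  constructor
  · refine fderiv_apply_eq_of_eventually_affine_on_line hdiff (hθt.mono fun t ht => ?_)
    rw [vectorField.apply_add_smul_ratio_preserving_direction hμθ ht,
      vectorField.apply_stationary hμθ hθ, zero_add]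
  · refine fderiv_apply_eq_of_eventually_affine_on_line hdiff (.of_forall fun t => ?_)
    rw [vectorField.apply_add_smul_sum_preserving_direction hμθ hθ,
      vectorField.apply_stationary hμθ hθ, zero_add]

/-- at the stationary point (x, θx, θ(1−x)), x ∈ (0,1), the Jacobian
of the vector field has eigenvector (0, x, 1−x) with eigenvalue −μ and
eigenvector (ζ, −β, β) with eigenvalue −ζ − β/θ. -/
theorem stmt_4 (β ζ μ θ : ℝ)
    (hβ : 0 < β) (hζ : 0 < ζ) (hμ : 0 < μ) (hβζ : ζ < β)
    (hθdef : θ = (β - ζ) / μ)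
    (F : ℝ × ℝ × ℝ → ℝ × ℝ × ℝ)
    (hF : ∀ p : ℝ × ℝ × ℝ,
      F p = (-ζ * p.1 * p.2.2 / (p.2.1 + p.2.2) + ζ * (1 - p.1) * p.2.1 / (p.2.1 + p.2.2),
             β * p.1 - μ * p.2.1 - ζ * p.2.1 / (p.2.1 + p.2.2),
             β * (1 - p.1) - μ * p.2.2 - ζ * p.2.2 / (p.2.1 + p.2.2))) :
    ∀ x ∈ Set.Ioo (0:ℝ) 1,
      fderiv ℝ F (x, θ * x, θ * (1 - x)) ((0:ℝ), x, 1 - x)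
        = (-μ) • ((0:ℝ), x, 1 - x) ∧
      fderiv ℝ F (x, θ * x, θ * (1 - x)) (ζ, -β, β)
        = (-ζ - β / θ) • (ζ, -β, β) :=
  stmt_4_general β ζ μ θ hμ hβζ hθdef F hF
end

section
/- In the fixed-population fluctuating-seed-bank setting (θ = (β−ζ)/μ > 0), define h₂ = ((1−2x)ỹ)²ζ(1+1/θ) / (2(2μ+ζ(1+1/θ))(μ+ζ(1+1/θ))) − (1−2x)ỹz̃μ / ((2μ+ζ(1+1/θ))(μ+ζ(1+1/θ))) − z̃²/(2(μ+ζ(1+1/θ))) and g(x) = 4x(1−x)(β + ζθ(1+θ))/(μ + ζ(1+1/θ)). Then (L⁽⁰⁾)⁺h₂ + g(x) = (z̃ + (1−2x)ỹ)z̃. -/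
/-!
`h₂` is a quadratic form in `(ỹ, z̃)`, so its first derivatives are linear and its second
derivatives constant, and `(L⁽⁰⁾)⁺h₂` is a quadratic polynomial. Its `ỹ²`, `ỹz̃` and `z̃²`
coefficients are those of `(z̃ + (1−2x)ỹ)z̃`; its constant term, coming from the diffusion part,
is cancelled by `g(x)` because `4x(1−x) = 1 − (1−2x)²`.
-/

def quadraticForm2 (A B C : ℝ) (q : ℝ × ℝ) : ℝ :=
  A * q.1 ^ 2 + B * q.1 * q.2 + C * q.2 ^ 2

lemma hasFDerivAt_quadraticForm2 (A B C : ℝ) (p : ℝ × ℝ) :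
    HasFDerivAt (quadraticForm2 A B C)
      ((2 * A * p.1 + B * p.2) • ContinuousLinearMap.fst ℝ ℝ ℝ
        + (B * p.1 + 2 * C * p.2) • ContinuousLinearMap.snd ℝ ℝ ℝ) p := by
  have hy : HasFDerivAt (Prod.fst : ℝ × ℝ → ℝ) (ContinuousLinearMap.fst ℝ ℝ ℝ) p :=
    hasFDerivAt_fst
  have hz : HasFDerivAt (Prod.snd : ℝ × ℝ → ℝ) (ContinuousLinearMap.snd ℝ ℝ ℝ) p :=
    hasFDerivAt_snd
  refine ((((hy.pow 2).const_mul A).add ((hy.const_mul B).mul hz)).add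
    ((hz.pow 2).const_mul C)).congr_fderiv ?_
  ext <;> simp <;> ring

lemma fderiv_quadraticForm2_apply (A B C : ℝ) (p v : ℝ × ℝ) :
    fderiv ℝ (quadraticForm2 A B C) p v =
      (2 * A * p.1 + B * p.2) * v.1 + (B * p.1 + 2 * C * p.2) * v.2 := by
  simp [(hasFDerivAt_quadraticForm2 A B C p).fderiv]

lemma fderiv_fderiv_quadraticForm2_apply (A B C : ℝ) (p v w : ℝ × ℝ) :
    fderiv ℝ (fun q => fderiv ℝ (quadraticForm2 A B C) q v) p w =
      2 * A * v.1 * w.1 + B * (v.1 * w.2 + v.2 * w.1) + 2 * C * v.2 * w.2 := by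
  have hlin : (fun q => fderiv ℝ (quadraticForm2 A B C) q v) =
      fun q : ℝ × ℝ => (2 * A * v.1 + B * v.2) * q.1 + (B * v.1 + 2 * C * v.2) * q.2 := by
    funext q
    rw [fderiv_quadraticForm2_apply]
    ring
  have hderiv : HasFDerivAt
      (fun q : ℝ × ℝ => (2 * A * v.1 + B * v.2) * q.1 + (B * v.1 + 2 * C * v.2) * q.2)
      ((2 * A * v.1 + B * v.2) • ContinuousLinearMap.fst ℝ ℝ ℝ
        + (B * v.1 + 2 * C * v.2) • ContinuousLinearMap.snd ℝ ℝ ℝ) p :=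
    (hasFDerivAt_fst.const_mul _).add (hasFDerivAt_snd.const_mul _)
  rw [hlin, hderiv.fderiv]
  simp only [add_apply, smul_apply, ContinuousLinearMap.coe_fst',
    ContinuousLinearMap.coe_snd', smul_eq_mul]
  ring

theorem stmt_16_general (β ζ μ θ x : ℝ)
    (hζ : 0 < ζ) (hμ : 0 < μ)
    (hθ : 0 < θ)
    (h₂ : ℝ × ℝ → ℝ)
    (hh₂ : ∀ p : ℝ × ℝ,
      h₂ p = ((1 - 2 * x) * p.1) ^ 2 * (ζ * (1 + 1 / θ)) /
          (2 * (2 * μ + ζ * (1 + 1 / θ)) * (μ + ζ * (1 + 1 / θ)))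
        - (1 - 2 * x) * p.1 * p.2 * μ /
          ((2 * μ + ζ * (1 + 1 / θ)) * (μ + ζ * (1 + 1 / θ)))
        - p.2 ^ 2 / (2 * (μ + ζ * (1 + 1 / θ)))) :
    ∀ p : ℝ × ℝ,
      -(μ * p.1) * fderiv ℝ h₂ p (1, 0)
      - (μ * p.2 + ζ * (1 + 1 / θ) * (p.2 + p.1 * (1 - 2 * x))) * fderiv ℝ h₂ p (0, 1)
      + β * fderiv ℝ (fun q => fderiv ℝ h₂ q (1, 0)) p (1, 0)
      - 2 * β * (1 - 2 * x) * fderiv ℝ (fun q => fderiv ℝ h₂ q (1, 0)) p (0, 1)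
      + (β + 4 * ζ * θ * (1 + θ) * x * (1 - x)) * fderiv ℝ (fun q => fderiv ℝ h₂ q (0, 1)) p (0, 1)
      + 4 * x * (1 - x) * (β + ζ * θ * (1 + θ)) / (μ + ζ * (1 + 1 / θ))
      = (p.2 + (1 - 2 * x) * p.1) * p.2 := by
  intro p
  have hu : 0 < ζ * (1 + 1 / θ) := by positivity
  generalize ζ * (1 + 1 / θ) = u at hu hh₂ ⊢
  have hD₁ : μ + u ≠ 0 := by positivity
  have hD₂ : 2 * μ + u ≠ 0 := by positivity
  have hquad : h₂ = quadraticForm2 ((1 - 2 * x) ^ 2 * u / (2 * (2 * μ + u) * (μ + u)))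
      (-((1 - 2 * x) * μ / ((2 * μ + u) * (μ + u)))) (-(1 / (2 * (μ + u)))) := by
    funext q
    rw [hh₂, quadraticForm2]
    ring
  rw [hquad]
  simp only [fderiv_fderiv_quadraticForm2_apply]
  simp only [fderiv_quadraticForm2_apply]
  field_simp
  ring

/-- with h₂ and g(x) as given, (L⁽⁰⁾)⁺h₂ + g(x) = (z̃ + (1−2x)ỹ)z̃.
Coordinates p = (ỹ, z̃); θ = (β−ζ)/μ > 0. -/
theorem stmt_16 (β ζ μ θ x : ℝ)
    (hβ : 0 < β) (hζ : 0 < ζ) (hμ : 0 < μ)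
    (hθdef : θ = (β - ζ) / μ) (hθ : 0 < θ)
    (h₂ : ℝ × ℝ → ℝ)
    (hh₂ : ∀ p : ℝ × ℝ,
      h₂ p = ((1 - 2 * x) * p.1) ^ 2 * (ζ * (1 + 1 / θ)) /
          (2 * (2 * μ + ζ * (1 + 1 / θ)) * (μ + ζ * (1 + 1 / θ)))
        - (1 - 2 * x) * p.1 * p.2 * μ /
          ((2 * μ + ζ * (1 + 1 / θ)) * (μ + ζ * (1 + 1 / θ)))
        - p.2 ^ 2 / (2 * (μ + ζ * (1 + 1 / θ)))) :
    ∀ p : ℝ × ℝ,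
      -(μ * p.1) * fderiv ℝ h₂ p (1, 0)
      - (μ * p.2 + ζ * (1 + 1 / θ) * (p.2 + p.1 * (1 - 2 * x))) * fderiv ℝ h₂ p (0, 1)
      + β * fderiv ℝ (fun q => fderiv ℝ h₂ q (1, 0)) p (1, 0)
      - 2 * β * (1 - 2 * x) * fderiv ℝ (fun q => fderiv ℝ h₂ q (1, 0)) p (0, 1)
      + (β + 4 * ζ * θ * (1 + θ) * x * (1 - x)) * fderiv ℝ (fun q => fderiv ℝ h₂ q (0, 1)) p (0, 1)
      + 4 * x * (1 - x) * (β + ζ * θ * (1 + θ)) / (μ + ζ * (1 + 1 / θ))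
      = (p.2 + (1 - 2 * x) * p.1) * p.2 :=
  stmt_16_general β ζ μ θ x hζ hμ hθ h₂ hh₂
end
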